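/- Let A1, A2 be isomorphic graded complex Gorenstein algebras with 2 < dim_ℂ A_j < ∞, maximal ideals 𝔪1, 𝔪2, common nil-index ν, and let ω_j : A_j → ℂ be ℂ-linear forms with ω_j(Ann(𝔪_j)) = ℂ. Fix an integer s with 2 ≤ s ≤ ν, a finite-dimensional ℂ-vector space W, and linear isomorphisms ψ_j : W → 𝔪_j/𝔪_j^{ν+2−s}. Define Q_j : W → ℂ by Q_j(w) := (1/s!)·ω_j(u^s), where u ∈ 𝔪_j is any element whose class modulo 𝔪_j^{ν+2−s} equals ψ_j(w) (this value is independent of the choice of u). Then for every function ℐ, defined on functions from W to ℂ and with values in ℂ, satisfying ℐ(f ∘ T) = ℐ(f) for all T ∈ GL(W) and ℐ(λ·f) = ℐ(f) for all λ ∈ ℂ∖{0}, one has ℐ(Q1) = ℐ(Q2). In particular, the value of any absolute classical invariant of degree-s forms on W evaluated at Q_j depends only on the invariant and the isomorphism class of the algebra. -/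
import Mathlib


open IsLocalRing

/-- The annihilator `Ann(𝔪) = {u ∈ 𝔪 : u·𝔪 = 0}` of the maximal ideal of a local ring. -/
def annMax (A : Type*) [CommRing A] [IsLocalRing A] : Ideal A where
  carrier := {u | u ∈ maximalIdeal A ∧ ∀ v ∈ maximalIdeal A, u * v = 0}
  add_mem' := by
    rintro x y ⟨hx1, hx2⟩ ⟨hy1, hy2⟩
    exact ⟨add_mem hx1 hy1, fun v hv => by rw [add_mul, hx2 v hv, hy2 v hv, add_zero]⟩
  zero_mem' := ⟨zero_mem _, fun v _ => zero_mul v⟩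
  smul_mem' := by
    rintro r x ⟨hx1, hx2⟩
    exact ⟨Ideal.mul_mem_left _ r hx1,
      fun v hv => by rw [smul_eq_mul, mul_assoc, hx2 v hv, mul_zero]⟩

/-- A complex Gorenstein algebra: a finite-dimensional local commutative `ℂ`-algebra with
`dim_ℂ A > 1` in which the annihilator of the maximal ideal is one-dimensional. -/
def IsGorenstein (A : Type*) [CommRing A] [Algebra ℂ A] [IsLocalRing A] : Prop :=
  1 < Module.finrank ℂ A ∧ Module.finrank ℂ ((annMax A).restrictScalars ℂ) = 1

/-- A (non-negatively) graded `ℂ`-algebra: `A = ⊕_{j≥0} ℒ_j` with `ℒ_j ℒ_k ⊆ ℒ_{j+k}` and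
`ℒ_0 = ℂ·1`. -/
def IsGradedCAlgebra (A : Type*) [CommRing A] [Algebra ℂ A] : Prop :=
  ∃ ℒ : ℕ → Submodule ℂ A,
    DirectSum.IsInternal ℒ ∧
    (∀ j k : ℕ, ∀ x ∈ ℒ j, ∀ y ∈ ℒ k, x * y ∈ ℒ (j + k)) ∧
    ℒ 0 = Submodule.span ℂ {(1 : A)}

set_option linter.unusedSectionVars false

set_option maxHeartbeats 1000000


section Helpers

variable {A : Type} [CommRing A] [Algebra ℂ A] [IsLocalRing A] [FiniteDimensional ℂ A]

lemma socle_exists (hm : maximalIdeal A ≠ ⊥) {N : ℕ}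
    (hnil : (maximalIdeal A) ^ (N + 1) = ⊥)
    {a : A} (ha : a ≠ 0) : ∃ y : A, a * y ≠ 0 ∧ a * y ∈ annMax A := by
  classical
  set P : ℕ → Prop := fun k => ∃ y ∈ (maximalIdeal A) ^ k, a * y ≠ 0 with hPdef
  have hP0 : P 0 := ⟨1, by simp, by simpa using ha⟩
  set k := Nat.findGreatest P N with hkdef
  have hk : P k := Nat.findGreatest_spec (Nat.zero_le N) hP0
  have hknext : ∀ y ∈ (maximalIdeal A) ^ (k + 1), a * y = 0 := by
    intro y hy
    by_cases hle : k + 1 ≤ N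
    · have h2 : ¬ ∃ y ∈ (maximalIdeal A) ^ (k + 1), a * y ≠ 0 :=
        Nat.findGreatest_is_greatest (Nat.lt_succ_self k) hle
      push_neg at h2
      exact h2 y hy
    · have hN : N + 1 ≤ k + 1 := by omega
      have : y ∈ (maximalIdeal A) ^ (N + 1) := Ideal.pow_le_pow_right hN hy
      rw [hnil, Ideal.mem_bot] at this
      rw [this, mul_zero]
  obtain ⟨y, hy, hay⟩ := hk
  have hann2 : ∀ v ∈ maximalIdeal A, (a * y) * v = 0 := by
    intro v hv
    have : y * v ∈ (maximalIdeal A) ^ (k + 1) := by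
      rw [pow_succ]
      exact Ideal.mul_mem_mul hy hv
    rw [mul_assoc]
    exact hknext _ this
  have hann1 : a * y ∈ maximalIdeal A := by
    by_contra hmem
    have hu : IsUnit (a * y) := by
      rw [mem_maximalIdeal, mem_nonunits_iff, not_not] at hmem
      exact hmem
    apply hm
    ext v
    simp only [Ideal.mem_bot]
    constructor
    · intro hv
      have h0 := hann2 v hv
      calc v = ↑hu.unit⁻¹ * ((a * y) * v) := by
                rw [← mul_assoc, IsUnit.val_inv_mul, one_mul]
        _ = 0 := by rw [h0, mul_zero]
    · rintro rfl; exact zero_mem _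
  exact ⟨y, hay, hann1, hann2⟩

lemma exists_rep (hm : maximalIdeal A ≠ ⊥) {N : ℕ}
    (hnil : (maximalIdeal A) ^ (N + 1) = ⊥)
    (hann : Module.finrank ℂ ((annMax A).restrictScalars ℂ) = 1)
    (ω' : A →ₗ[ℂ] ℂ) (hω' : ∃ x ∈ annMax A, ω' x ≠ 0)
    (ω : A →ₗ[ℂ] ℂ) : ∃ a : A, ∀ x, ω x = ω' (a * x) := by
  let Φ : A →ₗ[ℂ] Module.Dual ℂ A := (LinearMap.mul ℂ A).compr₂ ω'
  have hinj : Function.Injective Φ := by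
    rw [← LinearMap.ker_eq_bot]
    rw [LinearMap.ker_eq_bot']
    intro a ha0
    by_contra hne
    obtain ⟨y, hay0, hann'⟩ := socle_exists hm hnil hne
    obtain ⟨x', hx', hωx'⟩ := hω'
    set M := (annMax A).restrictScalars ℂ
    have hv : (⟨a * y, hann'⟩ : M) ≠ 0 := by
      intro h
      exact hay0 (congrArg Subtype.val h)
    obtain ⟨c, hc⟩ := (finrank_eq_one_iff_of_nonzero' (⟨a * y, hann'⟩ : M) hv).1 hann
      ⟨x', hx'⟩
    have hx'eq : x' = c • (a * y) := by
      have := congrArg Subtype.val hc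
      simpa using this.symm
    apply hωx'
    rw [hx'eq, map_smul]
    have : ω' (a * y) = 0 := by
      have := congrArg (fun f => f y) ha0
      simpa [Φ] using this
    rw [this, smul_zero]
  have hsurj : Function.Surjective Φ :=
    (LinearMap.injective_iff_surjective_of_finrank_eq_finrank
      (Subspace.dual_finrank_eq).symm).1 hinj
  obtain ⟨a, ha⟩ := hsurj ω
  refine ⟨a, fun x => ?_⟩
  rw [← ha]
  rfl

end Helpers
set_option linter.unusedSectionVars false

variable {A : Type} [CommRing A] [Algebra ℂ A] [IsLocalRing A]

lemma exists_pow_root {N : ℕ} (hnil : (maximalIdeal A) ^ (N + 1) = ⊥) {s : ℕ} (hs : 2 ≤ s)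
    {x : A} (hx : x ∈ maximalIdeal A) :
    ∃ h ∈ maximalIdeal A, (1 + h) ^ s = 1 + x := by
  obtain ⟨d, rfl⟩ : ∃ d, s = d + 2 := ⟨s - 2, by omega⟩
  set s := d + 2
  have hs0 : (s : ℂ) ≠ 0 := by
    simp only [Nat.cast_ne_zero]; omega
  suffices H : ∀ j : ℕ, ∃ h ∈ maximalIdeal A, (1 + h) ^ s - (1 + x) ∈ (maximalIdeal A) ^ (j + 1) by
    obtain ⟨h, hh, hr⟩ := H N
    rw [hnil, Ideal.mem_bot, sub_eq_zero] at hr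
    exact ⟨h, hh, hr⟩
  intro j
  induction j with
  | zero =>
    refine ⟨0, zero_mem _, ?_⟩
    have h0 : (1 + (0 : A)) ^ s - (1 + x) = -x := by ring
    rw [h0, zero_add, pow_one]
    exact neg_mem hx
  | succ j ih =>
    obtain ⟨h, hh, hr⟩ := ih
    set c : A := 1 + h with hc
    have hhn : IsNilpotent h := by
      refine ⟨N + 1, ?_⟩
      have : h ^ (N + 1) ∈ (maximalIdeal A) ^ (N + 1) := Ideal.pow_mem_pow hh _
      rwa [hnil, Ideal.mem_bot] at this
    have hcu : IsUnit c := hhn.isUnit_one_add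
    have hcu' : IsUnit (c ^ (s - 1)) := hcu.pow _
    set b : A := ↑hcu'.unit⁻¹ with hb
    have hbc : b * c ^ (s - 1) = 1 := IsUnit.val_inv_mul hcu'
    set r : A := c ^ s - (1 + x) with hrdef
    set δ : A := -((s : ℂ)⁻¹ • (b * r)) with hδdef
    have hδ : δ ∈ (maximalIdeal A) ^ (j + 1) := by
      apply neg_mem
      rw [Algebra.smul_def]
      exact Ideal.mul_mem_left _ _ (Ideal.mul_mem_left _ _ hr)
    have hδm : δ ∈ maximalIdeal A := by
      have := Ideal.pow_le_pow_right (I := maximalIdeal A) (Nat.le_add_left 1 j)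
      rw [pow_one] at this
      exact this hδ
    refine ⟨h + δ, add_mem hh hδm, ?_⟩
    have hrw : (1 : A) + (h + δ) = δ + c := by rw [hc]; ring
    rw [hrw, add_pow]
    have hsplit : ∀ i : ℕ, i ∈ Finset.range (d + 1) →
        δ ^ (i + 1 + 1) * c ^ (s - (i + 1 + 1)) * ((s.choose (i + 1 + 1) : A)) ∈
          (maximalIdeal A) ^ (j + 1 + 1) := by
      intro i _
      apply Ideal.mul_mem_right
      apply Ideal.mul_mem_right
      have h2 : δ ^ (i + 1 + 1) = δ * δ * δ ^ i := by ring
      rw [h2]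
      apply Ideal.mul_mem_right
      have : δ * δ ∈ (maximalIdeal A) ^ (j + 1) * (maximalIdeal A) ^ (j + 1) :=
        Ideal.mul_mem_mul hδ hδ
      rw [← pow_add] at this
      exact Ideal.pow_le_pow_right (by omega) this
    have hf1 : δ ^ 1 * c ^ (s - 1) * ((s.choose 1 : A)) = -r := by
      rw [pow_one, Nat.choose_one_right]
      have hcast : ((s : ℕ) : A) = algebraMap ℂ A (s : ℂ) := by
        rw [map_natCast]
      rw [hcast, hδdef]
      rw [neg_mul, neg_mul, smul_mul_assoc, smul_mul_assoc]
      have hinner : b * r * c ^ (s - 1) * (algebraMap ℂ A) (s : ℂ) = (s : ℂ) • r := by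
        calc b * r * c ^ (s - 1) * (algebraMap ℂ A) (s : ℂ)
            = (algebraMap ℂ A) (s : ℂ) * (b * c ^ (s - 1) * r) := by ring
          _ = (algebraMap ℂ A) (s : ℂ) * r := by rw [hbc, one_mul]
          _ = (s : ℂ) • r := (Algebra.smul_def _ _).symm
      rw [hinner, ← smul_assoc, smul_eq_mul, inv_mul_cancel₀ hs0, one_smul]
    rw [Finset.sum_range_succ', Finset.sum_range_succ']
    have hf0 : δ ^ 0 * c ^ (s - 0) * ((s.choose 0 : A)) = c ^ s := by simp
    rw [hf0, hf1]
    have : (∑ i ∈ Finset.range (d + 1),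
        δ ^ (i + 1 + 1) * c ^ (s - (i + 1 + 1)) * ((s.choose (i + 1 + 1) : A))) + -r + c ^ s
        - (1 + x) = ∑ i ∈ Finset.range (d + 1),
        δ ^ (i + 1 + 1) * c ^ (s - (i + 1 + 1)) * ((s.choose (i + 1 + 1) : A)) := by
      rw [hrdef]; ring
    rw [this]
    exact Ideal.sum_mem _ hsplit


/-- Let `A1, A2` be isomorphic graded complex Gorenstein algebras with
`2 < dim_ℂ A_j < ∞`, common nil-index `ν`, and `ℂ`-linear forms `ω_j` not vanishing on
`Ann(𝔪_j)`. Fix `2 ≤ s ≤ ν`, a finite-dimensional space `W`, and linear isomorphisms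
`ψ_j : W ≃ 𝔪_j/𝔪_j^{ν+2−s}`. If `Q_j(w) = (1/s!)·ω_j(u^s)` for any `u ∈ 𝔪_j` whose class is
`ψ_j(w)`, then `ℐ(Q1) = ℐ(Q2)` for every `GL(W)`-invariant, scaling-invariant function `ℐ`
on functions `W → ℂ`. -/
theorem invariants_of_nilpolynomial_components_well_defined
    (A1 : Type) [CommRing A1] [Algebra ℂ A1] [IsLocalRing A1] [FiniteDimensional ℂ A1]
    (A2 : Type) [CommRing A2] [Algebra ℂ A2] [IsLocalRing A2] [FiniteDimensional ℂ A2]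
    (hd1 : 2 < Module.finrank ℂ A1) (hd2 : 2 < Module.finrank ℂ A2)
    (hg1 : IsGorenstein A1) (hg2 : IsGorenstein A2)
    (hgr1 : IsGradedCAlgebra A1) (hgr2 : IsGradedCAlgebra A2)
    (hiso : Nonempty (A1 ≃ₐ[ℂ] A2))
    (ν : ℕ)
    (hν1lo : (maximalIdeal A1) ^ ν ≠ ⊥) (hν1hi : (maximalIdeal A1) ^ (ν + 1) = ⊥)
    (hν2lo : (maximalIdeal A2) ^ ν ≠ ⊥) (hν2hi : (maximalIdeal A2) ^ (ν + 1) = ⊥)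
    (ω1 : A1 →ₗ[ℂ] ℂ) (ω2 : A2 →ₗ[ℂ] ℂ)
    (hω1 : ∃ x ∈ annMax A1, ω1 x ≠ 0) (hω2 : ∃ x ∈ annMax A2, ω2 x ≠ 0)
    (s : ℕ) (hs2 : 2 ≤ s) (hsν : s ≤ ν)
    (W : Type) [AddCommGroup W] [Module ℂ W] [FiniteDimensional ℂ W]
    (ψ1 : W ≃ₗ[ℂ] (((maximalIdeal A1).map
        (Ideal.Quotient.mk ((maximalIdeal A1) ^ (ν + 2 - s)))).restrictScalars ℂ))
    (ψ2 : W ≃ₗ[ℂ] (((maximalIdeal A2).map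
        (Ideal.Quotient.mk ((maximalIdeal A2) ^ (ν + 2 - s)))).restrictScalars ℂ))
    (Q1 Q2 : W → ℂ)
    (hQ1 : ∀ w : W, ∀ u ∈ maximalIdeal A1,
      Ideal.Quotient.mk ((maximalIdeal A1) ^ (ν + 2 - s)) u = (ψ1 w).1 →
      Q1 w = ((Nat.factorial s : ℂ))⁻¹ * ω1 (u ^ s))
    (hQ2 : ∀ w : W, ∀ u ∈ maximalIdeal A2,
      Ideal.Quotient.mk ((maximalIdeal A2) ^ (ν + 2 - s)) u = (ψ2 w).1 →
      Q2 w = ((Nat.factorial s : ℂ))⁻¹ * ω2 (u ^ s))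
    (ℐ : (W → ℂ) → ℂ)
    (hinv : ∀ (f : W → ℂ) (T : W ≃ₗ[ℂ] W), ℐ (f ∘ T) = ℐ f)
    (hscale : ∀ (f : W → ℂ) (lam : ℂ), lam ≠ 0 → ℐ (fun w => lam * f w) = ℐ f) :
    ℐ Q1 = ℐ Q2 := by
  classical
  obtain ⟨φ⟩ := hiso
  -- the maximal ideal of A1 is nonzero
  have hm1ne : maximalIdeal A1 ≠ ⊥ := by
    intro hbot
    apply hν1lo
    rw [hbot, ← Ideal.zero_eq_bot, zero_pow (by omega : ν ≠ 0)]
  -- transfer of maximal ideals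
  have φm : ∀ x ∈ maximalIdeal A1, φ x ∈ maximalIdeal A2 := by
    intro x hx
    rw [mem_maximalIdeal, mem_nonunits_iff] at hx ⊢
    intro hu
    exact hx (by simpa using hu.map φ.symm)
  have φm' : ∀ x ∈ maximalIdeal A2, φ.symm x ∈ maximalIdeal A1 := by
    intro x hx
    rw [mem_maximalIdeal, mem_nonunits_iff] at hx ⊢
    intro hu
    exact hx (by simpa using hu.map φ)
  have φpow : ∀ (k : ℕ) (x : A1), x ∈ (maximalIdeal A1) ^ k →
      φ x ∈ (maximalIdeal A2) ^ k := by
    intro k x hx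
    have h1 : Ideal.map (φ : A1 →+* A2) (maximalIdeal A1) ≤ maximalIdeal A2 :=
      Ideal.map_le_iff_le_comap.2 (fun y hy => φm y hy)
    have h2 : φ x ∈ Ideal.map (φ : A1 →+* A2) ((maximalIdeal A1) ^ k) :=
      Ideal.mem_map_of_mem _ hx
    rw [Ideal.map_pow] at h2
    exact Ideal.pow_right_mono h1 k h2
  have φpow' : ∀ (k : ℕ) (x : A2), x ∈ (maximalIdeal A2) ^ k →
      φ.symm x ∈ (maximalIdeal A1) ^ k := by
    intro k x hx
    have h1 : Ideal.map (φ.symm : A2 →+* A1) (maximalIdeal A2) ≤ maximalIdeal A1 :=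
      Ideal.map_le_iff_le_comap.2 (fun y hy => φm' y hy)
    have h2 : φ.symm x ∈ Ideal.map (φ.symm : A2 →+* A1) ((maximalIdeal A2) ^ k) :=
      Ideal.mem_map_of_mem _ hx
    rw [Ideal.map_pow] at h2
    exact Ideal.pow_right_mono h1 k h2
  -- pull back ω2
  set ω' : A1 →ₗ[ℂ] ℂ := ω2.comp φ.toLinearMap with hω'def
  have hω'ex : ∃ x ∈ annMax A1, ω' x ≠ 0 := by
    obtain ⟨x2, hx2ann, hx2ne⟩ := hω2
    refine ⟨φ.symm x2, ⟨φm' x2 hx2ann.1, ?_⟩, ?_⟩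
    · intro v hv
      have : φ.symm x2 * v = φ.symm (x2 * φ v) := by
        rw [map_mul]; simp
      rw [this, hx2ann.2 (φ v) (φm v hv), map_zero]
    · simpa [hω'def] using hx2ne
  obtain ⟨a, ha⟩ := exists_rep hm1ne hν1hi hg1.2 ω' hω'ex ω1
  -- decompose a
  obtain ⟨a₀, ha₀mem⟩ := spectrum.nonempty_of_isAlgClosed_of_finiteDimensional ℂ a
  rw [spectrum.mem_iff] at ha₀mem
  set m : A1 := a - algebraMap ℂ A1 a₀ with hmdef
  have hmmem : m ∈ maximalIdeal A1 := by
    rw [mem_maximalIdeal, mem_nonunits_iff]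
    intro hu
    exact ha₀mem (by
      have : algebraMap ℂ A1 a₀ - a = -m := by rw [hmdef]; ring
      rw [this]
      exact hu.neg)
  have ha₀ne : a₀ ≠ 0 := by
    obtain ⟨x1, hx1ann, hx1ne⟩ := hω1
    intro h0
    apply hx1ne
    have hax : a * x1 = a₀ • x1 := by
      have hm0 : m * x1 = 0 := by rw [mul_comm]; exact hx1ann.2 m hmmem
      have : a = algebraMap ℂ A1 a₀ + m := by rw [hmdef]; ring
      rw [this, add_mul, hm0, add_zero, Algebra.smul_def]
    rw [ha x1, hax, map_smul, h0, zero_smul]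
  -- the s-th root
  have hm'mem : a₀⁻¹ • m ∈ maximalIdeal A1 := by
    rw [Algebra.smul_def]
    exact Ideal.mul_mem_left _ _ hmmem
  obtain ⟨hr, hhrm, hroot⟩ := exists_pow_root hν1hi hs2 hm'mem
  set g : A1 := 1 + hr with hgdef
  have hgm : IsUnit g := by
    refine IsNilpotent.isUnit_one_add ⟨ν + 1, ?_⟩
    have : hr ^ (ν + 1) ∈ (maximalIdeal A1) ^ (ν + 1) := Ideal.pow_mem_pow hhrm _
    rwa [hν1hi, Ideal.mem_bot] at this
  set gi : A1 := ↑hgm.unit⁻¹ with hgidef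
  have hgig : gi * g = 1 := IsUnit.val_inv_mul hgm
  have hag : a = a₀ • g ^ s := by
    rw [hroot]
    have h1 : a₀ • ((1 : A1) + a₀⁻¹ • m) = algebraMap ℂ A1 a₀ + m := by
      rw [smul_add, smul_smul, mul_inv_cancel₀ ha₀ne, one_smul,
        Algebra.algebraMap_eq_smul_one]
    rw [h1, hmdef]; ring
  have keyid : ∀ x : A1, ω1 x = a₀ * ω2 (φ (g ^ s * x)) := by
    intro x
    rw [ha x, hag, smul_mul_assoc, map_smul, smul_eq_mul]
    rfl
  -- quotient level
  have lift1 : ∀ w : W, ∃ u, u ∈ maximalIdeal A1 ∧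
      Ideal.Quotient.mk ((maximalIdeal A1) ^ (ν + 2 - s)) u =
        ((ψ1 w : A1 ⧸ (maximalIdeal A1) ^ (ν + 2 - s))) :=
    fun w => (Ideal.mem_map_iff_of_surjective _ Ideal.Quotient.mk_surjective).1 (ψ1 w).2
  have lift2 : ∀ w : W, ∃ u, u ∈ maximalIdeal A2 ∧
      Ideal.Quotient.mk ((maximalIdeal A2) ^ (ν + 2 - s)) u =
        ((ψ2 w : A2 ⧸ (maximalIdeal A2) ^ (ν + 2 - s))) :=
    fun w => (Ideal.mem_map_iff_of_surjective _ Ideal.Quotient.mk_surjective).1 (ψ2 w).2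
  choose L1 hL1m hL1mk using lift1
  choose L2 hL2m hL2mk using lift2
  have welldef12 : ∀ u u' : A1,
      Ideal.Quotient.mk ((maximalIdeal A1) ^ (ν + 2 - s)) u =
        Ideal.Quotient.mk ((maximalIdeal A1) ^ (ν + 2 - s)) u' →
      Ideal.Quotient.mk ((maximalIdeal A2) ^ (ν + 2 - s)) (φ (g * u)) =
        Ideal.Quotient.mk ((maximalIdeal A2) ^ (ν + 2 - s)) (φ (g * u')) := by
    intro u u' huu
    rw [Ideal.Quotient.eq] at huu ⊢
    have hd : φ (g * u) - φ (g * u') = φ (g * (u - u')) := by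
      rw [mul_sub, map_sub]
    rw [hd]
    exact φpow _ _ (Ideal.mul_mem_left _ g huu)
  have welldef21 : ∀ u u' : A2,
      Ideal.Quotient.mk ((maximalIdeal A2) ^ (ν + 2 - s)) u =
        Ideal.Quotient.mk ((maximalIdeal A2) ^ (ν + 2 - s)) u' →
      Ideal.Quotient.mk ((maximalIdeal A1) ^ (ν + 2 - s)) (gi * φ.symm u) =
        Ideal.Quotient.mk ((maximalIdeal A1) ^ (ν + 2 - s)) (gi * φ.symm u') := by
    intro u u' huu
    rw [Ideal.Quotient.eq] at huu ⊢
    have hd : gi * φ.symm u - gi * φ.symm u' = gi * φ.symm (u - u') := by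
      rw [map_sub, mul_sub]
    rw [hd]
    exact Ideal.mul_mem_left _ gi (φpow' _ _ huu)
  have memS2 : ∀ w : W, Ideal.Quotient.mk ((maximalIdeal A2) ^ (ν + 2 - s)) (φ (g * L1 w)) ∈
      (((maximalIdeal A2).map (Ideal.Quotient.mk ((maximalIdeal A2) ^ (ν + 2 - s)))).restrictScalars ℂ) :=
    fun w => Ideal.mem_map_of_mem _ (φm _ (Ideal.mul_mem_left _ g (hL1m w)))
  have memS1 : ∀ w : W, Ideal.Quotient.mk ((maximalIdeal A1) ^ (ν + 2 - s)) (gi * φ.symm (L2 w)) ∈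
      (((maximalIdeal A1).map (Ideal.Quotient.mk ((maximalIdeal A1) ^ (ν + 2 - s)))).restrictScalars ℂ) :=
    fun w => Ideal.mem_map_of_mem _ (Ideal.mul_mem_left _ gi (φm' _ (hL2m w)))
  have mk1smul : ∀ (c : ℂ) (u : A1),
      Ideal.Quotient.mk ((maximalIdeal A1) ^ (ν + 2 - s)) (c • u) =
        c • Ideal.Quotient.mk ((maximalIdeal A1) ^ (ν + 2 - s)) u := by
    intro c u
    rw [← Ideal.Quotient.mkₐ_eq_mk ℂ ((maximalIdeal A1) ^ (ν + 2 - s))]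
    exact map_smul (Ideal.Quotient.mkₐ ℂ ((maximalIdeal A1) ^ (ν + 2 - s))) c u
  have mk2smul : ∀ (c : ℂ) (u : A2),
      Ideal.Quotient.mk ((maximalIdeal A2) ^ (ν + 2 - s)) (c • u) =
        c • Ideal.Quotient.mk ((maximalIdeal A2) ^ (ν + 2 - s)) u := by
    intro c u
    rw [← Ideal.Quotient.mkₐ_eq_mk ℂ ((maximalIdeal A2) ^ (ν + 2 - s))]
    exact map_smul (Ideal.Quotient.mkₐ ℂ ((maximalIdeal A2) ^ (ν + 2 - s))) c u
  -- the transformation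
  set e : W → W := fun w =>
    ψ2.symm ⟨Ideal.Quotient.mk ((maximalIdeal A2) ^ (ν + 2 - s)) (φ (g * L1 w)), memS2 w⟩
    with hedef
  set e' : W → W := fun w =>
    ψ1.symm ⟨Ideal.Quotient.mk ((maximalIdeal A1) ^ (ν + 2 - s)) (gi * φ.symm (L2 w)), memS1 w⟩
    with he'def
  have heval : ∀ w : W, ((ψ2 (e w) : A2 ⧸ (maximalIdeal A2) ^ (ν + 2 - s))) =
      Ideal.Quotient.mk ((maximalIdeal A2) ^ (ν + 2 - s)) (φ (g * L1 w)) := by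
    intro w
    simp only [hedef, LinearEquiv.apply_symm_apply]
  have he'val : ∀ w : W, ((ψ1 (e' w) : A1 ⧸ (maximalIdeal A1) ^ (ν + 2 - s))) =
      Ideal.Quotient.mk ((maximalIdeal A1) ^ (ν + 2 - s)) (gi * φ.symm (L2 w)) := by
    intro w
    simp only [he'def, LinearEquiv.apply_symm_apply]
  have hTdata : ∃ T : W ≃ₗ[ℂ] W, ∀ w, T w = e w := by
    refine ⟨{ toFun := e
              invFun := e'
              map_add' := ?_
              map_smul' := ?_
              left_inv := ?_
              right_inv := ?_ }, fun w => rfl⟩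
    · intro w w'
      have h1 : Ideal.Quotient.mk ((maximalIdeal A1) ^ (ν + 2 - s)) (L1 (w + w')) =
          Ideal.Quotient.mk ((maximalIdeal A1) ^ (ν + 2 - s)) (L1 w + L1 w') := by
        rw [map_add, hL1mk, hL1mk, hL1mk, map_add]
        rfl
      have h2 := welldef12 _ _ h1
      simp only [hedef]
      have h3 : (⟨Ideal.Quotient.mk ((maximalIdeal A2) ^ (ν + 2 - s)) (φ (g * L1 (w + w'))),
            memS2 _⟩ :
          (((maximalIdeal A2).map
            (Ideal.Quotient.mk ((maximalIdeal A2) ^ (ν + 2 - s)))).restrictScalars ℂ)) =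
          ⟨_, memS2 w⟩ + ⟨_, memS2 w'⟩ := by
        apply Subtype.ext
        show Ideal.Quotient.mk ((maximalIdeal A2) ^ (ν + 2 - s)) (φ (g * L1 (w + w'))) =
          Ideal.Quotient.mk ((maximalIdeal A2) ^ (ν + 2 - s)) (φ (g * L1 w)) +
          Ideal.Quotient.mk ((maximalIdeal A2) ^ (ν + 2 - s)) (φ (g * L1 w'))
        rw [h2, mul_add, map_add, map_add]
      rw [h3, map_add]
    · intro c w
      have h1 : Ideal.Quotient.mk ((maximalIdeal A1) ^ (ν + 2 - s)) (L1 (c • w)) =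
          Ideal.Quotient.mk ((maximalIdeal A1) ^ (ν + 2 - s)) (c • L1 w) := by
        rw [mk1smul, hL1mk, hL1mk, map_smul]
        rfl
      have h2 := welldef12 _ _ h1
      simp only [hedef]
      have h3 : (⟨Ideal.Quotient.mk ((maximalIdeal A2) ^ (ν + 2 - s)) (φ (g * L1 (c • w))),
            memS2 _⟩ :
          (((maximalIdeal A2).map
            (Ideal.Quotient.mk ((maximalIdeal A2) ^ (ν + 2 - s)))).restrictScalars ℂ)) =
          c • ⟨_, memS2 w⟩ := by
        apply Subtype.ext
        show Ideal.Quotient.mk ((maximalIdeal A2) ^ (ν + 2 - s)) (φ (g * L1 (c • w))) =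
          c • Ideal.Quotient.mk ((maximalIdeal A2) ^ (ν + 2 - s)) (φ (g * L1 w))
        rw [h2]
        have h4 : g * c • L1 w = c • (g * L1 w) := mul_smul_comm c g (L1 w)
        rw [h4, map_smul, mk2smul]
      rw [h3, map_smul]
      rfl
    · intro w
      have h1 : Ideal.Quotient.mk ((maximalIdeal A2) ^ (ν + 2 - s)) (L2 (e w)) =
          Ideal.Quotient.mk ((maximalIdeal A2) ^ (ν + 2 - s)) (φ (g * L1 w)) := by
        rw [hL2mk, heval]
      have h2 := welldef21 _ _ h1
      have h3 : gi * φ.symm (φ (g * L1 w)) = L1 w := by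
        rw [AlgEquiv.symm_apply_apply, ← mul_assoc, hgig, one_mul]
      have h4 : (⟨Ideal.Quotient.mk ((maximalIdeal A1) ^ (ν + 2 - s)) (gi * φ.symm (L2 (e w))),
            memS1 _⟩ :
          (((maximalIdeal A1).map
            (Ideal.Quotient.mk ((maximalIdeal A1) ^ (ν + 2 - s)))).restrictScalars ℂ)) = ψ1 w := by
        apply Subtype.ext
        show Ideal.Quotient.mk ((maximalIdeal A1) ^ (ν + 2 - s)) (gi * φ.symm (L2 (e w))) = _
        rw [h2, h3, hL1mk]
      simp only [he'def]
      show ψ1.symm ⟨Ideal.Quotient.mk ((maximalIdeal A1) ^ (ν + 2 - s))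
        (gi * φ.symm (L2 (e w))), memS1 _⟩ = w
      rw [h4, LinearEquiv.symm_apply_apply]
    · intro w
      have h1 : Ideal.Quotient.mk ((maximalIdeal A1) ^ (ν + 2 - s)) (L1 (e' w)) =
          Ideal.Quotient.mk ((maximalIdeal A1) ^ (ν + 2 - s)) (gi * φ.symm (L2 w)) := by
        rw [hL1mk, he'val]
      have h2 := welldef12 _ _ h1
      have h3 : g * (gi * φ.symm (L2 w)) = φ.symm (L2 w) := by
        rw [← mul_assoc, mul_comm g gi, hgig, one_mul]
      have h4 : (⟨Ideal.Quotient.mk ((maximalIdeal A2) ^ (ν + 2 - s)) (φ (g * L1 (e' w))),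
            memS2 _⟩ :
          (((maximalIdeal A2).map
            (Ideal.Quotient.mk ((maximalIdeal A2) ^ (ν + 2 - s)))).restrictScalars ℂ)) = ψ2 w := by
        apply Subtype.ext
        show Ideal.Quotient.mk ((maximalIdeal A2) ^ (ν + 2 - s)) (φ (g * L1 (e' w))) = _
        rw [h2, h3, AlgEquiv.apply_symm_apply, hL2mk]
      simp only [hedef]
      show ψ2.symm ⟨Ideal.Quotient.mk ((maximalIdeal A2) ^ (ν + 2 - s))
        (φ (g * L1 (e' w))), memS2 _⟩ = w
      rw [h4, LinearEquiv.symm_apply_apply]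
  obtain ⟨T, hTe⟩ := hTdata
  -- the key pointwise identity
  have key : ∀ w : W, Q1 w = a₀ * Q2 (T w) := by
    intro w
    have hq1 := hQ1 w (L1 w) (hL1m w) (hL1mk w)
    have hTw : Ideal.Quotient.mk ((maximalIdeal A2) ^ (ν + 2 - s)) (φ (g * L1 w)) =
        ((ψ2 (T w)) : A2 ⧸ (maximalIdeal A2) ^ (ν + 2 - s)) := by
      rw [hTe, heval]
    have hq2 := hQ2 (T w) (φ (g * L1 w)) (φm _ (Ideal.mul_mem_left _ g (hL1m w))) hTw
    rw [hq1, hq2]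
    have hp : φ (g * L1 w) ^ s = φ (g ^ s * L1 w ^ s) := by
      rw [← map_pow φ, mul_pow]
    rw [hp, keyid (L1 w ^ s)]
    ring
  have hQeq : Q1 = fun w => a₀ * (Q2 ∘ ⇑T) w := funext fun w => key w
  rw [hQeq, hscale (Q2 ∘ ⇑T) a₀ ha₀ne, hinv Q2 T]
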